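/- Hierarchical induction lemma for the sharp decay bounds (Section 5.3): Let M ∈ ℕ, C ≥ 1, C₁ > 0, ε > 0, s₁ ≥ 2. Let A₀,…,A_M and B₀,…,B_M be nondecreasing, nonnegative continuous functions on [2,s₁] such that for all s ∈ [2,s₁]: A₀(s) + B₀(s) ≤ C·C₁ε, and for each 1 ≤ k ≤ M: A_k(s) ≤ C·C₁ε + C·C₁ε ∫₂^s λ^{−1} B_k(λ) dλ + C·C₁ε ∫₂^s λ^{−1} A_{k−1}(λ) dλ + C Σ_{k₁=1}^{k−1} ∫₂^s λ^{−1} B_{k₁}(λ) A_{k−k₁}(λ) dλ, and B_k(s) ≤ C·C₁ε + C·C₁ε A_k(s) + C Σ_{k₁=1}^{k−1} A_{k₁}(s) A_{k−k₁}(s). Then there exists a constant C′ depending only on C and M such that, provided C′·C₁ε ≤ 1, for all 1 ≤ k ≤ M and all s ∈ [2,s₁]: A_k(s) + B_k(s) ≤ C′·C₁ε · s^{C′·C₁ε}. -/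

import Mathlib

noncomputable section
open MeasureTheory

lemma contOn_intervalIntegrable {f : ℝ → ℝ} {s₁ s : ℝ}
    (hf : ContinuousOn f (Set.Icc 2 s₁)) (hs : s ∈ Set.Icc (2:ℝ) s₁) :
    IntervalIntegrable f volume 2 s := by
  apply ContinuousOn.intervalIntegrable (hf.mono ?_)
  rw [Set.uIcc_of_le hs.1]
  exact Set.Icc_subset_Icc le_rfl hs.2

lemma invContOn {s₁ : ℝ} : ContinuousOn (fun lam : ℝ => lam⁻¹) (Set.Icc 2 s₁) := by
  apply ContinuousOn.inv₀ continuousOn_id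
  intro x hx
  simp only [id_eq]
  intro h
  rw [h] at hx
  exact absurd hx.1 (by norm_num)

lemma rpowContOn {s₁ p : ℝ} : ContinuousOn (fun lam : ℝ => lam ^ p) (Set.Icc 2 s₁) := by
  apply ContinuousOn.rpow_const continuousOn_id
  intro x hx
  left
  simp only [id_eq]
  intro h
  rw [h] at hx
  exact absurd hx.1 (by norm_num)

lemma rpow_integral_bound {p s : ℝ} (hp : 0 < p) (hs : 2 ≤ s) :
    ∫ lam in (2:ℝ)..s, lam ^ (p - 1) ≤ s ^ p / p := by
  rw [integral_rpow (Or.inl (by linarith : (-1:ℝ) < p - 1))]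
  have h2 : (0:ℝ) ≤ (2:ℝ) ^ (p - 1 + 1) := Real.rpow_nonneg (by norm_num) _
  have hpe : p - 1 + 1 = p := by ring
  rw [hpe] at h2 ⊢
  gcongr
  linarith

lemma Drec {C : ℝ} (hC : 1 ≤ C) {k : ℕ} (hk : 1 ≤ k) :
    C + C * (C + 1 + (3*C+3) ^ (9^k) + 2 * (∑ k₁ ∈ Finset.Ico 1 k, (3*C+3) ^ (9^(k₁+1)) * (3*C+3) ^ (9^(k-k₁+1))))
      + C * (∑ k₁ ∈ Finset.Ico 1 k, (3*C+3) ^ (9^(k₁+1)) * (3*C+3) ^ (9^(k-k₁+1)))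
      ≤ (3*C+3) ^ (9^(k+1)) := by
  set R : ℝ := 3*C+3 with hR
  have hR6 : 6 ≤ R := by rw [hR]; linarith
  have hR1 : (1:ℝ) ≤ R := by linarith
  have hR0 : (0:ℝ) ≤ R := by linarith
  set S : ℝ := ∑ k₁ ∈ Finset.Ico 1 k, R ^ (9^(k₁+1)) * R ^ (9^(k-k₁+1)) with hS
  have hterm : ∀ k₁ ∈ Finset.Ico 1 k, R ^ (9^(k₁+1)) * R ^ (9^(k-k₁+1)) ≤ R ^ (2 * 9^k) := by
    intro k₁ hk₁
    rw [Finset.mem_Ico] at hk₁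
    rw [← pow_add]
    apply pow_le_pow_right₀ hR1
    have h1 : 9^(k₁+1) ≤ 9^k := Nat.pow_le_pow_right (by norm_num) (by omega)
    have h2 : 9^(k-k₁+1) ≤ 9^k := Nat.pow_le_pow_right (by norm_num) (by omega)
    omega
  have hSle : S ≤ (k:ℝ) * R ^ (2 * 9^k) := by
    calc S ≤ ∑ k₁ ∈ Finset.Ico 1 k, R ^ (2 * 9^k) := Finset.sum_le_sum hterm
      _ = ((k - 1 : ℕ) : ℝ) * R ^ (2 * 9^k) := by
          rw [Finset.sum_const, Nat.card_Ico]; simp [nsmul_eq_mul]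
      _ ≤ (k:ℝ) * R ^ (2 * 9^k) := by
          have : ((k - 1 : ℕ) : ℝ) ≤ (k : ℝ) := by exact_mod_cast Nat.sub_le k 1
          have hp : (0:ℝ) ≤ R ^ (2*9^k) := pow_nonneg hR0 _
          nlinarith
  have hkR : (k:ℝ) ≤ R ^ k := by
    calc (k:ℝ) ≤ 2 ^ k := by exact_mod_cast (Nat.lt_two_pow_self (n := k)).le
      _ ≤ R ^ k := pow_le_pow_left₀ (by norm_num) (by linarith) k
  have hS2 : S ≤ R ^ (2 * 9^k + k) := by
    calc S ≤ (k:ℝ) * R ^ (2*9^k) := hSle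
      _ ≤ R ^ k * R ^ (2*9^k) := by
          have hp : (0:ℝ) ≤ R ^ (2*9^k) := pow_nonneg hR0 _
          exact mul_le_mul_of_nonneg_right hkR hp
      _ = R ^ (2*9^k + k) := by rw [← pow_add]; ring_nf
  have hS0 : 0 ≤ S := by
    apply Finset.sum_nonneg
    intro i _
    exact mul_nonneg (pow_nonneg hR0 _) (pow_nonneg hR0 _)
  set N : ℕ := 2 * 9^k + k + 2 with hN
  have hRN : ∀ m, m ≤ N → R ^ m ≤ R ^ N := fun m hm => pow_le_pow_right₀ hR1 hm
  have hCR : C ≤ R := by linarith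
  have e1 : 2*C + C^2 ≤ R ^ N := by
    have : 2*C + C^2 ≤ R^2 := by nlinarith
    calc 2*C + C^2 ≤ R^2 := this
      _ ≤ R ^ N := hRN 2 (by omega)
  have e2 : C * R ^ (9^k) ≤ R ^ N := by
    calc C * R ^ (9^k) ≤ R * R ^ (9^k) := mul_le_mul_of_nonneg_right hCR (pow_nonneg hR0 _)
      _ = R ^ (9^k + 1) := by rw [← pow_succ']
      _ ≤ R ^ N := hRN _ (by omega)
  have e3 : 3 * C * S ≤ R ^ N := by
    calc 3 * C * S ≤ R^2 * S :=
          mul_le_mul_of_nonneg_right (show 3*C ≤ R^2 by nlinarith) hS0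
      _ ≤ R^2 * R ^ (2*9^k + k) := by
          apply mul_le_mul_of_nonneg_left hS2 (by positivity)
      _ = R ^ N := by rw [← pow_add, hN]; ring
  have hfinal : 3 * R ^ N ≤ R ^ (9^(k+1)) := by
    calc 3 * R ^ N ≤ R * R ^ N := mul_le_mul_of_nonneg_right (by linarith) (pow_nonneg hR0 _)
      _ = R ^ (N + 1) := by rw [← pow_succ']
      _ ≤ R ^ (9^(k+1)) := by
          apply pow_le_pow_right₀ hR1
          have h9 : k < 9 ^ k := Nat.lt_pow_self (n := k) (by norm_num)
          have : 9 ^ (k+1) = 9 * 9 ^ k := by rw [pow_succ]; ring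
          omega
  calc C + C * (C + 1 + R ^ (9^k) + 2 * S) + C * S
      = (2*C + C^2) + C * R ^ (9^k) + 3*C*S := by ring
    _ ≤ R ^ N + R ^ N + R ^ N := by linarith
    _ = 3 * R ^ N := by ring
    _ ≤ R ^ (9^(k+1)) := hfinal

lemma inv_mul_intervalIntegrable {f : ℝ → ℝ} {s₁ s : ℝ}
    (hf : ContinuousOn f (Set.Icc 2 s₁)) (hs : s ∈ Set.Icc (2:ℝ) s₁) :
    IntervalIntegrable (fun lam => lam⁻¹ * f lam) volume 2 s :=
  contOn_intervalIntegrable (invContOn.mul hf) hs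

lemma gronwall_aux {f : ℝ → ℝ} {s₀ α β : ℝ} (hs₀ : 2 ≤ s₀)
    (hf : ContinuousOn f (Set.Icc 2 s₀))
    (hα : 0 ≤ α) (hβ : 0 ≤ β)
    (hineq : ∀ s ∈ Set.Icc (2:ℝ) s₀, f s ≤ α + β * ∫ lam in (2:ℝ)..s, lam⁻¹ * f lam) :
    f s₀ ≤ α * (s₀ / 2) ^ β := by
  set g : ℝ → ℝ := fun lam => lam⁻¹ * f lam with hg
  set G : ℝ → ℝ := fun s => α + β * ∫ lam in (2:ℝ)..s, g lam with hGdef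
  set E : ℝ → ℝ := fun s => Real.exp (-β * Real.log (s / 2)) with hEdef
  set H : ℝ → ℝ := fun s => G s * E s with hHdef
  have hgcont : ContinuousOn g (Set.Icc 2 s₀) := by
    apply ContinuousOn.mul _ hf
    apply ContinuousOn.inv₀ continuousOn_id
    intro x hx
    simp only [Set.mem_Icc] at hx
    simp only [id_eq]
    intro h; rw [h] at hx; linarith [hx.1]
  have hgint : ∀ s ∈ Set.Icc (2:ℝ) s₀, IntervalIntegrable g volume 2 s :=
    fun s hs => inv_mul_intervalIntegrable hf hs
  have huIcc : Set.uIcc (2:ℝ) s₀ = Set.Icc 2 s₀ := Set.uIcc_of_le hs₀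
  have hGcont : ContinuousOn G (Set.Icc 2 s₀) := by
    apply continuousOn_const.add (continuousOn_const.mul _)
    rw [← huIcc]
    exact intervalIntegral.continuousOn_primitive_interval (huIcc ▸ hgcont.integrableOn_Icc)
  have hfleG : ∀ s ∈ Set.Icc (2:ℝ) s₀, f s ≤ G s := hineq
  have hHderiv : ∀ x ∈ Set.Ioo (2:ℝ) s₀,
      HasDerivAt H ((β * x⁻¹ * E x) * (f x - G x)) x := by
    intro x hx
    have hx2 : (2:ℝ) < x := hx.1
    have hx0 : (0:ℝ) < x := by linarith
    have hGd : HasDerivAt G (β * g x) x := by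
      have h1 : HasDerivAt (fun s => ∫ lam in (2:ℝ)..s, g lam) (g x) x := by
        apply intervalIntegral.integral_hasDerivAt_right
          (hgint x ⟨le_of_lt hx2, le_of_lt hx.2⟩)
        · exact ContinuousAt.stronglyMeasurableAtFilter isOpen_Ioo
            (fun y hy => hgcont.continuousAt (Icc_mem_nhds hy.1 hy.2)) x hx
        · exact (hgcont.continuousAt (Icc_mem_nhds hx2 hx.2))
      exact (h1.const_mul β).const_add α
    have hEd : HasDerivAt E (E x * (-β * x⁻¹)) x := by
      have hlog : HasDerivAt (fun s : ℝ => Real.log (s / 2)) (x⁻¹) x := by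
        have : HasDerivAt (fun s : ℝ => s / 2) (1/2) x := by
          simpa using (hasDerivAt_id x).div_const 2
        have := (Real.hasDerivAt_log (by positivity : x / 2 ≠ 0)).comp x this
        refine HasDerivAt.congr_deriv this ?_
        field_simp
      exact (hlog.const_mul (-β)).exp
    have := hGd.mul hEd
    refine HasDerivAt.congr_deriv this ?_
    have hgx : g x = x⁻¹ * f x := rfl
    rw [hgx]
    ring
  have hHanti : AntitoneOn H (Set.Icc 2 s₀) := by
    apply antitoneOn_of_deriv_nonpos (convex_Icc 2 s₀)
    · apply hGcont.mul
      apply Real.continuous_exp.comp_continuousOn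
      apply ContinuousOn.mul continuousOn_const
      apply ContinuousOn.log (continuousOn_id.div_const 2)
      intro x hx
      simp only [Set.mem_Icc] at hx
      have hx0 : (0:ℝ) < x := by linarith [hx.1]
      simp only [id_eq]
      positivity
    · intro x hx
      rw [interior_Icc] at hx
      exact ((hHderiv x hx).differentiableAt).differentiableWithinAt
    · intro x hx
      rw [interior_Icc] at hx
      rw [(hHderiv x hx).deriv]
      have h1 : 0 ≤ β * x⁻¹ * E x := by
        have : (0:ℝ) < x := by linarith [hx.1]
        positivity
      have h2 : f x - G x ≤ 0 := by
        have := hfleG x ⟨le_of_lt hx.1, le_of_lt hx.2⟩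
        linarith
      exact mul_nonpos_of_nonneg_of_nonpos h1 h2
  have hH2 : H 2 = α := by
    simp [hHdef, hGdef, hEdef]
  have key : H s₀ ≤ α := by
    rw [← hH2]
    exact hHanti (Set.left_mem_Icc.mpr hs₀) (Set.right_mem_Icc.mpr hs₀) hs₀
  have hfG : f s₀ ≤ G s₀ := hfleG s₀ (Set.right_mem_Icc.mpr hs₀)
  have hGH : G s₀ = H s₀ * Real.exp (β * Real.log (s₀ / 2)) := by
    simp only [hHdef, hEdef]
    rw [mul_assoc, ← Real.exp_add]
    simp
  have hrpow : (s₀ / 2) ^ β = Real.exp (β * Real.log (s₀ / 2)) := by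
    rw [Real.rpow_def_of_pos (by linarith : (0:ℝ) < s₀ / 2)]
    ring_nf
  calc f s₀ ≤ G s₀ := hfG
    _ = H s₀ * Real.exp (β * Real.log (s₀ / 2)) := hGH
    _ ≤ α * Real.exp (β * Real.log (s₀ / 2)) := by
        apply mul_le_mul_of_nonneg_right key (le_of_lt (Real.exp_pos _))
    _ = α * (s₀ / 2) ^ β := by rw [hrpow]

set_option maxHeartbeats 2000000 in
/-- Hierarchical induction lemma for the sharp decay bounds (Section 5.3). -/
theorem stmt_16 : ∀ (M : ℕ) (C : ℝ), 1 ≤ C → ∃ C' > (0:ℝ),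
    ∀ (C₁ ε s₁ : ℝ) (A B : ℕ → ℝ → ℝ),
      0 < C₁ → 0 < ε → 2 ≤ s₁ →
      (∀ k ≤ M, ContinuousOn (A k) (Set.Icc 2 s₁) ∧ ContinuousOn (B k) (Set.Icc 2 s₁)) →
      (∀ k ≤ M, ∀ s ∈ Set.Icc (2:ℝ) s₁, 0 ≤ A k s ∧ 0 ≤ B k s) →
      (∀ k ≤ M, MonotoneOn (A k) (Set.Icc 2 s₁) ∧ MonotoneOn (B k) (Set.Icc 2 s₁)) →
      (∀ s ∈ Set.Icc (2:ℝ) s₁, A 0 s + B 0 s ≤ C * C₁ * ε) →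
      (∀ k, 1 ≤ k → k ≤ M → ∀ s ∈ Set.Icc (2:ℝ) s₁,
        A k s ≤ C * C₁ * ε
          + C * C₁ * ε * (∫ lam in (2:ℝ)..s, lam⁻¹ * B k lam)
          + C * C₁ * ε * (∫ lam in (2:ℝ)..s, lam⁻¹ * A (k - 1) lam)
          + C * ∑ k₁ ∈ Finset.Ico 1 k,
              ∫ lam in (2:ℝ)..s, lam⁻¹ * B k₁ lam * A (k - k₁) lam) →
      (∀ k, 1 ≤ k → k ≤ M → ∀ s ∈ Set.Icc (2:ℝ) s₁,
        B k s ≤ C * C₁ * ε + C * C₁ * ε * A k s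
          + C * ∑ k₁ ∈ Finset.Ico 1 k, A k₁ s * A (k - k₁) s) →
      C' * C₁ * ε ≤ 1 →
      ∀ k, 1 ≤ k → k ≤ M → ∀ s ∈ Set.Icc (2:ℝ) s₁,
        A k s + B k s ≤ C' * C₁ * ε * s ^ (C' * C₁ * ε) := by
  intro M C hC
  have hC0 : (0:ℝ) < C := by linarith
  set R : ℝ := 3*C+3 with hRdef
  have hR6 : (6:ℝ) ≤ R := by rw [hRdef]; linarith
  have hR1 : (1:ℝ) ≤ R := by linarith
  have hR0 : (0:ℝ) < R := by linarith
  set D : ℕ → ℝ := fun k => R ^ (9^(k+1)) with hDdef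
  have hD0 : ∀ j, (0:ℝ) < D j := fun j => pow_pos hR0 _
  have hDC : ∀ j, C ≤ D j := by
    intro j
    calc C ≤ R := by linarith
      _ = R ^ 1 := (pow_one R).symm
      _ ≤ R ^ (9^(j+1)) := pow_le_pow_right₀ hR1 (Nat.one_le_pow _ _ (by norm_num))
  refine ⟨R ^ (9^(M+2)), by positivity, ?_⟩
  intro C₁ ε s₁ A B hC₁ hε hs₁ hcont hpos hmono h0 hA hB hsmall
  set η : ℝ := C₁ * ε with hηdef
  have hη0 : (0:ℝ) < η := mul_pos hC₁ hε
  have hC'1 : (1:ℝ) ≤ R ^ (9^(M+2)) := by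
    calc (1:ℝ) = R ^ 0 := (pow_zero R).symm
      _ ≤ R ^ (9^(M+2)) := pow_le_pow_right₀ hR1 (Nat.zero_le _)
  have hC'η : R ^ (9^(M+2)) * η ≤ 1 := by
    calc R ^ (9^(M+2)) * η = R ^ (9^(M+2)) * C₁ * ε := by rw [hηdef, mul_assoc]
      _ ≤ 1 := hsmall
  have hη1 : η ≤ 1 := by
    linarith only [hC'η, mul_nonneg (sub_nonneg.mpr hC'1) hη0.le]
  have hmulass : C * C₁ * ε = C * η := by rw [hηdef, mul_assoc]
  rw [hmulass] at h0
  simp only [hmulass] at hA hB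
  have hcontA : ∀ j, j ≤ M → ContinuousOn (A j) (Set.Icc 2 s₁) := fun j hj => (hcont j hj).1
  have hcontB : ∀ j, j ≤ M → ContinuousOn (B j) (Set.Icc 2 s₁) := fun j hj => (hcont j hj).2
  -- main inductive claim
  have key : ∀ k, k ≤ M → ∀ s₀ ∈ Set.Icc (2:ℝ) s₁,
      A k s₀ ≤ D k * η * s₀ ^ ((4:ℝ)^k * C^2 * η) ∧
      B k s₀ ≤ D k * η * s₀ ^ ((4:ℝ)^k * C^2 * η) := by
    intro k
    induction k using Nat.strong_induction_on with
    | _ k ih =>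
      intro hkM s₀ hs₀
      have hs₀2 : (2:ℝ) ≤ s₀ := hs₀.1
      have hs₀1 : s₀ ≤ s₁ := hs₀.2
      have hs01 : (1:ℝ) ≤ s₀ := by linarith
      have hs00 : (0:ℝ) < s₀ := by linarith
      have he0 : (0:ℝ) ≤ (4:ℝ)^k * C^2 * η := by positivity
      have hrp1 : (1:ℝ) ≤ s₀ ^ ((4:ℝ)^k * C^2 * η) := by
        calc (1:ℝ) = (1:ℝ) ^ ((4:ℝ)^k*C^2*η) := (Real.one_rpow _).symm
          _ ≤ s₀ ^ ((4:ℝ)^k*C^2*η) := Real.rpow_le_rpow (by norm_num) hs01 he0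
      rcases Nat.eq_zero_or_pos k with hk0 | hk1
      · subst hk0
        have h0' := h0 s₀ hs₀
        have hA0 := (hpos 0 (Nat.zero_le M) s₀ hs₀).1
        have hB0 := (hpos 0 (Nat.zero_le M) s₀ hs₀).2
        have hD0' := hD0 0
        have hDC' := hDC 0
        constructor
        · calc A 0 s₀ ≤ C * η := by linarith only [h0', hA0, hB0]
            _ ≤ D 0 * η := mul_le_mul_of_nonneg_right hDC' hη0.le
            _ ≤ D 0 * η * s₀ ^ ((4:ℝ)^0 * C^2 * η) := by
                linarith only [mul_le_mul_of_nonneg_left hrp1 (mul_nonneg hD0'.le hη0.le)]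
        · calc B 0 s₀ ≤ C * η := by linarith only [h0', hA0, hB0]
            _ ≤ D 0 * η := mul_le_mul_of_nonneg_right hDC' hη0.le
            _ ≤ D 0 * η * s₀ ^ ((4:ℝ)^0 * C^2 * η) := by
                linarith only [mul_le_mul_of_nonneg_left hrp1 (mul_nonneg hD0'.le hη0.le)]
      · -- inductive step: k ≥ 1
        have hk1' : 1 ≤ k := hk1
        obtain ⟨q, hqdef⟩ : ∃ x : ℝ, x = (4:ℝ)^k * C^2 * η / 2 := ⟨_, rfl⟩
        obtain ⟨e, hedef⟩ : ∃ x : ℝ, x = (4:ℝ)^k * C^2 * η := ⟨_, rfl⟩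
        obtain ⟨S, hSdef⟩ : ∃ x : ℝ, x = ∑ k₁ ∈ Finset.Ico 1 k, D k₁ * D (k - k₁) := ⟨_, rfl⟩
        rw [show (4:ℝ)^k * C^2 * η = e from hedef.symm]
        have h4k : (4:ℝ) ≤ (4:ℝ)^k := by
          calc (4:ℝ) = 4^1 := (pow_one 4).symm
            _ ≤ 4^k := pow_le_pow_right₀ (by norm_num) hk1
        have hq0 : 0 < q := by rw [hqdef]; positivity
        have he0' : (0:ℝ) ≤ e := by rw [hedef]; positivity
        have hqe : q ≤ e := by rw [hqdef, hedef]; linarith [he0']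
        have hS0 : 0 ≤ S := by
          rw [hSdef]
          exact Finset.sum_nonneg fun i _ => mul_nonneg (hD0 i).le (hD0 _).le
        have hs0q0 : (0:ℝ) ≤ s₀ ^ q := Real.rpow_nonneg (by linarith) _
        have hs0q1 : (1:ℝ) ≤ s₀ ^ q := by
          calc (1:ℝ) = (1:ℝ) ^ q := (Real.one_rpow _).symm
            _ ≤ s₀ ^ q := Real.rpow_le_rpow (by norm_num) hs01 hq0.le
        -- IH product bounds
        have hIH : ∀ k₁ ∈ Finset.Ico 1 k, ∀ lam ∈ Set.Icc (2:ℝ) s₁,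
            A k₁ lam * A (k - k₁) lam ≤ D k₁ * D (k - k₁) * η^2 * lam ^ q ∧
            B k₁ lam * A (k - k₁) lam ≤ D k₁ * D (k - k₁) * η^2 * lam ^ q := by
          intro k₁ hk₁ lam hlam
          rw [Finset.mem_Ico] at hk₁
          have hlam1 : (1:ℝ) ≤ lam := by linarith [hlam.1]
          have hlam0 : (0:ℝ) < lam := by linarith
          have ih1 := ih k₁ (by omega) (by omega) lam hlam
          have ih2 := ih (k - k₁) (by omega) (by omega) lam hlam
          have hA2 := (hpos (k - k₁) (by omega) lam hlam).1
          have hB1 := (hpos k₁ (by omega) lam hlam).2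
          have hA1 := (hpos k₁ (by omega) lam hlam).1
          have hexp : (4:ℝ)^k₁ * C^2 * η + (4:ℝ)^(k-k₁) * C^2 * η ≤ q := by
            rw [hqdef]
            have hn : 2 * ((4:ℕ)^k₁ + 4^(k-k₁)) ≤ 4^k := by
              have h1 : (4:ℕ)^k₁ ≤ 4^(k-1) := Nat.pow_le_pow_right (by norm_num) (by omega)
              have h2 : (4:ℕ)^(k-k₁) ≤ 4^(k-1) := Nat.pow_le_pow_right (by norm_num) (by omega)
              have h3 : (4:ℕ)^(k-1) * 4 = 4^k := by
                rw [← pow_succ]; congr 1; omega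
              omega
            have hnr : 2 * ((4:ℝ)^k₁ + (4:ℝ)^(k-k₁)) ≤ (4:ℝ)^k := by exact_mod_cast hn
            linarith only [mul_le_mul_of_nonneg_right hnr
              (show (0:ℝ) ≤ C^2*η/2 by positivity)]
          have hlsum : lam ^ ((4:ℝ)^k₁*C^2*η) * lam ^ ((4:ℝ)^(k-k₁)*C^2*η)
              ≤ lam ^ q := by
            rw [← Real.rpow_add hlam0]
            exact Real.rpow_le_rpow_of_exponent_le hlam1 hexp
          have hb1 : (0:ℝ) ≤ D k₁ * η * lam ^ ((4:ℝ)^k₁*C^2*η) := by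
            have := Real.rpow_nonneg hlam0.le ((4:ℝ)^k₁*C^2*η)
            have := (hD0 k₁).le
            positivity
          constructor
          · calc A k₁ lam * A (k - k₁) lam
                ≤ (D k₁ * η * lam ^ ((4:ℝ)^k₁*C^2*η)) * (D (k-k₁) * η * lam ^ ((4:ℝ)^(k-k₁)*C^2*η)) :=
                  mul_le_mul ih1.1 ih2.1 hA2 hb1
              _ = D k₁ * D (k-k₁) * η^2 * (lam ^ ((4:ℝ)^k₁*C^2*η) * lam ^ ((4:ℝ)^(k-k₁)*C^2*η)) := by ring
              _ ≤ D k₁ * D (k-k₁) * η^2 * lam ^ q := by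
                  apply mul_le_mul_of_nonneg_left hlsum
                  have := (hD0 k₁).le
                  have := (hD0 (k-k₁)).le
                  positivity
          · calc B k₁ lam * A (k - k₁) lam
                ≤ (D k₁ * η * lam ^ ((4:ℝ)^k₁*C^2*η)) * (D (k-k₁) * η * lam ^ ((4:ℝ)^(k-k₁)*C^2*η)) :=
                  mul_le_mul ih1.2 ih2.1 hA2 hb1
              _ = D k₁ * D (k-k₁) * η^2 * (lam ^ ((4:ℝ)^k₁*C^2*η) * lam ^ ((4:ℝ)^(k-k₁)*C^2*η)) := by ring
              _ ≤ D k₁ * D (k-k₁) * η^2 * lam ^ q := by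
                  apply mul_le_mul_of_nonneg_left hlsum
                  have := (hD0 k₁).le
                  have := (hD0 (k-k₁)).le
                  positivity
        -- pointwise bound for B k
        have hBpt : ∀ lam ∈ Set.Icc (2:ℝ) s₁,
            B k lam ≤ C*η + C*η*A k lam + C*S*η^2*lam^q := by
          intro lam hlam
          have hb := hB k hk1 hkM lam hlam
          have hsum : ∑ k₁ ∈ Finset.Ico 1 k, A k₁ lam * A (k-k₁) lam ≤ S * (η^2 * lam^q) := by
            rw [hSdef, Finset.sum_mul]
            apply Finset.sum_le_sum
            intro i hi
            calc A i lam * A (k-i) lam ≤ D i * D (k-i) * η^2 * lam^q := (hIH i hi lam hlam).1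
              _ = D i * D (k-i) * (η^2 * lam^q) := by ring
          have h2 := mul_le_mul_of_nonneg_left hsum hC0.le
          calc B k lam ≤ C*η + C*η*A k lam + C * ∑ k₁ ∈ Finset.Ico 1 k, A k₁ lam * A (k-k₁) lam := hb
            _ ≤ C*η + C*η*A k lam + C*S*η^2*lam^q := by linarith only [h2]
        -- Gronwall setup
        have hgron : ∀ s ∈ Set.Icc (2:ℝ) s₀,
            A k s ≤ (C + 1 + D (k-1) + 2*S) * η * s₀ ^ q
              + (C^2 * η^2) * ∫ lam in (2:ℝ)..s, lam⁻¹ * A k lam := by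
          intro s hs
          have hs2 : (2:ℝ) ≤ s := hs.1
          have hss1 : s ∈ Set.Icc (2:ℝ) s₁ := ⟨hs.1, le_trans hs.2 hs₀1⟩
          have hsubs : Set.Icc (2:ℝ) s ⊆ Set.Icc (2:ℝ) s₁ :=
            Set.Icc_subset_Icc le_rfl hss1.2
          have intAk : IntervalIntegrable (fun lam => lam⁻¹ * A k lam) volume 2 s :=
            inv_mul_intervalIntegrable (hcontA k hkM) hss1
          have intP : IntervalIntegrable (fun lam : ℝ => lam ^ (q-1)) volume 2 s :=
            contOn_intervalIntegrable rpowContOn hss1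
          have hJ0 : 0 ≤ ∫ lam in (2:ℝ)..s, lam⁻¹ * A k lam := by
            apply intervalIntegral.integral_nonneg hs2
            intro x hx
            exact mul_nonneg (inv_nonneg.mpr (by linarith [hx.1]))
              ((hpos k hkM x (hsubs hx)).1)
          have hP0 : 0 ≤ ∫ lam in (2:ℝ)..s, lam ^ (q-1) := by
            apply intervalIntegral.integral_nonneg hs2
            intro x hx
            exact Real.rpow_nonneg (by linarith [hx.1]) _
          have hPle : (∫ lam in (2:ℝ)..s, lam ^ (q-1)) ≤ s₀^q / q := by
            calc (∫ lam in (2:ℝ)..s, lam ^ (q-1)) ≤ s^q / q := rpow_integral_bound hq0 hs2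
              _ ≤ s₀^q / q := by
                  have h := Real.rpow_le_rpow (by linarith : (0:ℝ) ≤ s) hs.2 hq0.le
                  exact (div_le_div_iff_of_pos_right hq0).mpr h
          -- pointwise integrand bounds
          have hptB : ∀ lam ∈ Set.Icc (2:ℝ) s,
              lam⁻¹ * B k lam ≤ (C*η + C*S*η^2) * lam^(q-1) + C*η*(lam⁻¹ * A k lam) := by
            intro lam hlam
            have hlam2 : (2:ℝ) ≤ lam := hlam.1
            have hlam0 : (0:ℝ) < lam := by linarith
            have hlam1 : (1:ℝ) ≤ lam := by linarith
            have hinv : lam⁻¹ ≤ lam^(q-1) := by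
              rw [← Real.rpow_neg_one lam]
              exact Real.rpow_le_rpow_of_exponent_le hlam1 (by linarith)
            have hq1 : lam⁻¹ * lam^q = lam^(q-1) := by
              rw [← Real.rpow_neg_one lam, ← Real.rpow_add hlam0]
              ring_nf
            have hBb := hBpt lam (hsubs hlam)
            have hAnn := (hpos k hkM lam (hsubs hlam)).1
            calc lam⁻¹ * B k lam ≤ lam⁻¹ * (C*η + C*η*A k lam + C*S*η^2*lam^q) :=
                  mul_le_mul_of_nonneg_left hBb (inv_nonneg.mpr hlam0.le)
              _ = C*η*lam⁻¹ + C*η*(lam⁻¹*A k lam) + C*S*η^2*(lam⁻¹*lam^q) := by ring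
              _ ≤ C*η*lam^(q-1) + C*η*(lam⁻¹*A k lam) + C*S*η^2*lam^(q-1) := by
                  rw [hq1]
                  have h := mul_le_mul_of_nonneg_left hinv (show (0:ℝ) ≤ C*η by positivity)
                  linarith
              _ = (C*η + C*S*η^2)*lam^(q-1) + C*η*(lam⁻¹ * A k lam) := by ring
          have hI1 : (∫ lam in (2:ℝ)..s, lam⁻¹ * B k lam)
              ≤ (C*η + C*S*η^2) * (∫ lam in (2:ℝ)..s, lam ^ (q-1))
                + C*η * ∫ lam in (2:ℝ)..s, lam⁻¹ * A k lam := by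
            have intB : IntervalIntegrable (fun lam => lam⁻¹ * B k lam) volume 2 s :=
              inv_mul_intervalIntegrable (hcontB k hkM) hss1
            have intRHS : IntervalIntegrable
                (fun lam => (C*η + C*S*η^2) * lam^(q-1) + C*η*(lam⁻¹ * A k lam)) volume 2 s :=
              (intP.const_mul _).add (intAk.const_mul _)
            calc (∫ lam in (2:ℝ)..s, lam⁻¹ * B k lam)
                ≤ ∫ lam in (2:ℝ)..s, ((C*η + C*S*η^2) * lam^(q-1) + C*η*(lam⁻¹ * A k lam)) :=
                  intervalIntegral.integral_mono_on hs2 intB intRHS hptB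
              _ = (C*η + C*S*η^2) * (∫ lam in (2:ℝ)..s, lam ^ (q-1))
                  + C*η * ∫ lam in (2:ℝ)..s, lam⁻¹ * A k lam := by
                  rw [intervalIntegral.integral_add (intP.const_mul _) (intAk.const_mul _),
                    intervalIntegral.integral_const_mul, intervalIntegral.integral_const_mul]
          have hI2 : (∫ lam in (2:ℝ)..s, lam⁻¹ * A (k-1) lam)
              ≤ D (k-1) * η * ∫ lam in (2:ℝ)..s, lam ^ (q-1) := by
            have intA' : IntervalIntegrable (fun lam => lam⁻¹ * A (k-1) lam) volume 2 s :=
              inv_mul_intervalIntegrable (hcontA (k-1) (by omega)) hss1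
            have hexp2 : (4:ℝ)^(k-1) * C^2 * η ≤ q := by
              rw [hqdef]
              have hn : 2 * (4:ℕ)^(k-1) ≤ 4^k := by
                have h3 : (4:ℕ)^(k-1) * 4 = 4^k := by
                  rw [← pow_succ]; congr 1; omega
                omega
              have hnr : 2 * (4:ℝ)^(k-1) ≤ (4:ℝ)^k := by exact_mod_cast hn
              linarith only [mul_le_mul_of_nonneg_right hnr
                (show (0:ℝ) ≤ C^2*η/2 by positivity)]
            have hpt : ∀ lam ∈ Set.Icc (2:ℝ) s,
                lam⁻¹ * A (k-1) lam ≤ D (k-1) * η * lam ^ (q-1) := by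
              intro lam hlam
              have hlam0 : (0:ℝ) < lam := by linarith [hlam.1]
              have hlam1 : (1:ℝ) ≤ lam := by linarith [hlam.1]
              have ihprev := (ih (k-1) (by omega) (by omega) lam (hsubs hlam)).1
              have hmm : lam⁻¹ * lam ^ ((4:ℝ)^(k-1)*C^2*η) ≤ lam ^ (q-1) := by
                rw [← Real.rpow_neg_one lam, ← Real.rpow_add hlam0]
                exact Real.rpow_le_rpow_of_exponent_le hlam1 (by linarith)
              calc lam⁻¹ * A (k-1) lam
                  ≤ lam⁻¹ * (D (k-1) * η * lam ^ ((4:ℝ)^(k-1)*C^2*η)) :=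
                    mul_le_mul_of_nonneg_left ihprev (inv_nonneg.mpr hlam0.le)
                _ = D (k-1) * η * (lam⁻¹ * lam ^ ((4:ℝ)^(k-1)*C^2*η)) := by ring
                _ ≤ D (k-1) * η * lam ^ (q-1) := by
                    apply mul_le_mul_of_nonneg_left hmm
                    have := (hD0 (k-1)).le
                    positivity
            calc (∫ lam in (2:ℝ)..s, lam⁻¹ * A (k-1) lam)
                ≤ ∫ lam in (2:ℝ)..s, D (k-1) * η * lam ^ (q-1) :=
                  intervalIntegral.integral_mono_on hs2 intA' (intP.const_mul _) hpt
              _ = D (k-1) * η * ∫ lam in (2:ℝ)..s, lam ^ (q-1) := by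
                  rw [intervalIntegral.integral_const_mul]
          have hI3 : (∑ k₁ ∈ Finset.Ico 1 k, ∫ lam in (2:ℝ)..s, lam⁻¹ * B k₁ lam * A (k-k₁) lam)
              ≤ S * (η^2 * ∫ lam in (2:ℝ)..s, lam ^ (q-1)) := by
            rw [hSdef, Finset.sum_mul]
            apply Finset.sum_le_sum
            intro i hi
            have hi' := Finset.mem_Ico.mp hi
            have intBA : IntervalIntegrable (fun lam => lam⁻¹ * B i lam * A (k-i) lam) volume 2 s :=
              contOn_intervalIntegrable
                ((invContOn.mul (hcontB i (by omega))).mul (hcontA (k-i) (by omega))) hss1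
            have hpt : ∀ lam ∈ Set.Icc (2:ℝ) s,
                lam⁻¹ * B i lam * A (k-i) lam ≤ D i * D (k-i) * η^2 * lam ^ (q-1) := by
              intro lam hlam
              have hlam0 : (0:ℝ) < lam := by linarith [hlam.1]
              have hlam1 : (1:ℝ) ≤ lam := by linarith [hlam.1]
              have hBA := (hIH i hi lam (hsubs hlam)).2
              have hq1 : lam⁻¹ * lam^q = lam^(q-1) := by
                rw [← Real.rpow_neg_one lam, ← Real.rpow_add hlam0]
                ring_nf
              calc lam⁻¹ * B i lam * A (k-i) lam
                  = lam⁻¹ * (B i lam * A (k-i) lam) := by ring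
                _ ≤ lam⁻¹ * (D i * D (k-i) * η^2 * lam^q) :=
                    mul_le_mul_of_nonneg_left hBA (inv_nonneg.mpr hlam0.le)
                _ = D i * D (k-i) * η^2 * (lam⁻¹ * lam^q) := by ring
                _ = D i * D (k-i) * η^2 * lam^(q-1) := by rw [hq1]
            calc (∫ lam in (2:ℝ)..s, lam⁻¹ * B i lam * A (k-i) lam)
                ≤ ∫ lam in (2:ℝ)..s, D i * D (k-i) * η^2 * lam ^ (q-1) :=
                  intervalIntegral.integral_mono_on hs2 intBA (intP.const_mul _) hpt
              _ = D i * D (k-i) * η^2 * ∫ lam in (2:ℝ)..s, lam ^ (q-1) := by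
                  rw [intervalIntegral.integral_const_mul]
              _ = D i * D (k-i) * (η^2 * ∫ lam in (2:ℝ)..s, lam ^ (q-1)) := by ring
          -- numeric assembly
          set P : ℝ := ∫ lam in (2:ℝ)..s, lam ^ (q-1) with hPdef
          set J : ℝ := ∫ lam in (2:ℝ)..s, lam⁻¹ * A k lam with hJdef
          have hηP : η * P ≤ s₀^q / C^2 := by
            have h1 : η * P ≤ η * (s₀^q/q) := mul_le_mul_of_nonneg_left hPle hη0.le
            have h3 : η * (s₀^q/q) = 2*s₀^q/((4:ℝ)^k*C^2) := by
              rw [hqdef]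
              field_simp
            have h4 : 2*s₀^q/((4:ℝ)^k*C^2) ≤ s₀^q/C^2 := by
              rw [div_le_div_iff₀ (by positivity) (by positivity)]
              have hx1 : (0:ℝ) ≤ ((4:ℝ)^k - 2) * s₀^q * C^2 :=
                mul_nonneg (mul_nonneg (by linarith only [h4k]) hs0q0) (sq_nonneg C)
              linarith only [hx1]
            linarith only [h3 ▸ h1, h4]
          have hAk := hA k hk1 hkM s hss1
          have hDkm0 := hD0 (k-1)
          have hCη0 : (0:ℝ) ≤ C*η := by positivity
          have b1 : C*η ≤ C*η*s₀^q := by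
            linarith only [mul_le_mul_of_nonneg_left hs0q1 hCη0]
          have b2 : C*η*((C*η + C*S*η^2)*P + C*η*J) ≤ (1+S)*η*s₀^q + C^2*η^2*J := by
            have hb := mul_le_mul_of_nonneg_left hηP
              (show (0:ℝ) ≤ C^2*η*(1+S*η) by positivity)
            have heq : C^2*η*(1+S*η)*(s₀^q/C^2) = (1+S*η)*η*s₀^q := by
              field_simp
            have h2 : C^2*η*(1+S*η)*(η*P) ≤ (1+S*η)*η*s₀^q := by rw [← heq]; exact hb
            have h3 : (1+S*η)*η*s₀^q ≤ (1+S)*η*s₀^q := by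
              linarith only [mul_nonneg (mul_nonneg (mul_nonneg hS0
                (sub_nonneg.mpr hη1)) hη0.le) hs0q0]
            linarith only [h2, h3]
          have b3 : C*η*(D (k-1)*η*P) ≤ D (k-1)*η*s₀^q := by
            have hb := mul_le_mul_of_nonneg_left hηP
              (show (0:ℝ) ≤ C*η*D (k-1) by positivity)
            have heq : C*η*D (k-1)*(s₀^q/C^2) = D (k-1)*η*s₀^q/C := by
              field_simp
            have h2 : C*η*D (k-1)*(η*P) ≤ D (k-1)*η*s₀^q/C := by rw [← heq]; exact hb
            have h3 : D (k-1)*η*s₀^q/C ≤ D (k-1)*η*s₀^q := by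
              rw [div_le_iff₀ hC0]
              linarith only [mul_nonneg (mul_nonneg (mul_nonneg hDkm0.le hη0.le) hs0q0)
                (sub_nonneg.mpr hC)]
            linarith only [h2, h3]
          have b4 : C*(S*(η^2*P)) ≤ S*η*s₀^q := by
            have hb := mul_le_mul_of_nonneg_left hηP
              (show (0:ℝ) ≤ C*S*η by positivity)
            have heq : C*S*η*(s₀^q/C^2) = S*η*s₀^q/C := by
              field_simp
            have h2 : C*S*η*(η*P) ≤ S*η*s₀^q/C := by rw [← heq]; exact hb
            have h3 : S*η*s₀^q/C ≤ S*η*s₀^q := by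
              rw [div_le_iff₀ hC0]
              linarith only [mul_nonneg (mul_nonneg (mul_nonneg hS0 hη0.le) hs0q0)
                (sub_nonneg.mpr hC)]
            linarith only [h2, h3]
          calc A k s ≤ C*η + C*η*(∫ lam in (2:ℝ)..s, lam⁻¹ * B k lam)
                + C*η*(∫ lam in (2:ℝ)..s, lam⁻¹ * A (k-1) lam)
                + C * ∑ k₁ ∈ Finset.Ico 1 k, ∫ lam in (2:ℝ)..s, lam⁻¹ * B k₁ lam * A (k-k₁) lam := hAk
            _ ≤ C*η + C*η*((C*η + C*S*η^2)*P + C*η*J) + C*η*(D (k-1)*η*P) + C*(S*(η^2*P)) := by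
                have m1 := mul_le_mul_of_nonneg_left hI1 hCη0
                have m2 := mul_le_mul_of_nonneg_left hI2 hCη0
                have m3 := mul_le_mul_of_nonneg_left hI3 hC0.le
                linarith only [m1, m2, m3]
            _ ≤ (C + 1 + D (k-1) + 2*S) * η * s₀ ^ q + (C^2 * η^2) * J := by
                linarith only [b1, b2, b3, b4]
        -- apply Gronwall
        have hK0 : (0:ℝ) ≤ C + 1 + D (k-1) + 2*S := by
          linarith only [hD0 (k-1), hS0, hC]
        have hα0 : (0:ℝ) ≤ (C + 1 + D (k-1) + 2*S) * η * s₀ ^ q := by positivity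
        have hg := gronwall_aux hs₀2 ((hcontA k hkM).mono (Set.Icc_subset_Icc le_rfl hs₀1))
          hα0 (by positivity) hgron
        -- convert Gronwall output
        have h5 : (s₀/2) ^ (C^2*η^2) ≤ s₀ ^ (C^2*η^2) :=
          Real.rpow_le_rpow (by linarith) (by linarith) (by positivity)
        have h7 : q + C^2*η^2 ≤ e := by
          rw [hqdef, hedef]
          have hy1 : (0:ℝ) ≤ C^2*η*(1-η) :=
            mul_nonneg (mul_nonneg (sq_nonneg C) hη0.le) (sub_nonneg.mpr hη1)
          have hy2 : (0:ℝ) ≤ ((4:ℝ)^k - 2)*(C^2*η) :=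
            mul_nonneg (by linarith only [h4k]) (mul_nonneg (sq_nonneg C) hη0.le)
          linarith only [hy1, hy2]
        have h8 : s₀^q * s₀^(C^2*η^2) ≤ s₀^e := by
          rw [← Real.rpow_add hs00]
          exact Real.rpow_le_rpow_of_exponent_le hs01 h7
        have hs0e0 : (0:ℝ) ≤ s₀ ^ e := Real.rpow_nonneg hs00.le _
        -- recursion constant bound
        have hd' : C + C*(C + 1 + D (k-1) + 2*S) + C*S ≤ D k := by
          have hd := Drec hC hk1'
          have h1 : D (k-1) = (3*C+3)^(9^k) := by
            rw [hDdef]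
            simp only []
            rw [hRdef]
            congr 2
            omega
          have h2 : S = ∑ k₁ ∈ Finset.Ico 1 k, (3*C+3) ^ (9^(k₁+1)) * (3*C+3) ^ (9^(k-k₁+1)) := by
            rw [hSdef, hDdef, hRdef]
          have h3 : D k = (3*C+3)^(9^(k+1)) := by rw [hDdef, hRdef]
          rw [h1, h2, h3]
          exact hd
        have hKD : C + 1 + D (k-1) + 2*S ≤ D k := by
          linarith only [hd', mul_nonneg (sub_nonneg.mpr hC) hK0,
            mul_nonneg hC0.le hS0, hC0.le]
        have hAfin : A k s₀ ≤ (C + 1 + D (k-1) + 2*S) * η * s₀ ^ e := by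
          calc A k s₀ ≤ (C + 1 + D (k-1) + 2*S) * η * s₀ ^ q * (s₀/2) ^ (C^2*η^2) := hg
            _ ≤ (C + 1 + D (k-1) + 2*S) * η * s₀ ^ q * s₀ ^ (C^2*η^2) := by
                apply mul_le_mul_of_nonneg_left h5
                positivity
            _ = (C + 1 + D (k-1) + 2*S) * η * (s₀^q * s₀^(C^2*η^2)) := by ring
            _ ≤ (C + 1 + D (k-1) + 2*S) * η * s₀ ^ e := by
                apply mul_le_mul_of_nonneg_left h8
                positivity
        constructor
        · calc A k s₀ ≤ (C + 1 + D (k-1) + 2*S) * η * s₀ ^ e := hAfin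
            _ ≤ D k * η * s₀ ^ e := by
                apply mul_le_mul_of_nonneg_right _ hs0e0
                apply mul_le_mul_of_nonneg_right hKD hη0.le
        · have hBb := hBpt s₀ hs₀
          have hqee : s₀^q ≤ s₀^e := Real.rpow_le_rpow_of_exponent_le hs01 hqe
          have hrp1e : (1:ℝ) ≤ s₀ ^ e := by rw [hedef]; exact hrp1
          have hAk0 := (hpos k hkM s₀ hs₀).1
          calc B k s₀ ≤ C*η + C*η*A k s₀ + C*S*η^2*s₀^q := hBb
            _ ≤ (C + C*(C + 1 + D (k-1) + 2*S) + C*S) * η * s₀ ^ e := by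
                have hCη0 : (0:ℝ) ≤ C*η := by positivity
                have t1 : C*η ≤ C*η*s₀^e := by
                  linarith only [mul_le_mul_of_nonneg_left hrp1e hCη0]
                have t2 : C*η*A k s₀ ≤ C*(C + 1 + D (k-1) + 2*S)*η*s₀^e := by
                  have h := mul_le_mul_of_nonneg_left hAfin (show (0:ℝ) ≤ C*η by positivity)
                  have h2 : C*η*((C + 1 + D (k-1) + 2*S)*η*s₀^e)
                      ≤ C*(C + 1 + D (k-1) + 2*S)*η*s₀^e := by
                    linarith only [mul_nonneg (mul_nonneg (mul_nonneg hC0.le hK0)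
                      (mul_nonneg hη0.le hs0e0)) (sub_nonneg.mpr hη1)]
                  linarith only [h, h2]
                have t3 : C*S*η^2*s₀^q ≤ C*S*η*s₀^e := by
                  linarith only [mul_le_mul_of_nonneg_left hqee
                      (show (0:ℝ) ≤ C*S*η^2 by positivity),
                    mul_nonneg (mul_nonneg (mul_nonneg (mul_nonneg hC0.le hS0) hη0.le)
                      hs0e0) (sub_nonneg.mpr hη1)]
                linarith only [t1, t2, t3]
            _ ≤ D k * η * s₀ ^ e := by
                apply mul_le_mul_of_nonneg_right _ hs0e0
                apply mul_le_mul_of_nonneg_right hd' hη0.le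
  -- conclude
  intro k hk1 hkM s hs
  have hs2 : (2:ℝ) ≤ s := hs.1
  have hs1' : (1:ℝ) ≤ s := by linarith
  obtain ⟨hAb, hBb⟩ := key k hkM s hs
  have h2D : 2 * D k ≤ R ^ (9^(M+2)) := by
    rw [hDdef]
    simp only []
    calc 2 * R ^ (9^(k+1)) ≤ R * R ^ (9^(k+1)) :=
        mul_le_mul_of_nonneg_right (by linarith) (pow_nonneg hR0.le _)
      _ = R ^ (9^(k+1) + 1) := by rw [← pow_succ']
      _ ≤ R ^ (9^(M+2)) := by
          apply pow_le_pow_right₀ hR1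
          have h1 : 9^(k+1) ≤ 9^(M+1) := Nat.pow_le_pow_right (by norm_num) (by omega)
          have h2 : 9^(M+1) + 1 ≤ 9^(M+2) := by
            have : 9^(M+2) = 9 * 9^(M+1) := by rw [pow_succ]; ring
            have h3 : 1 ≤ 9^(M+1) := Nat.one_le_pow _ _ (by norm_num)
            omega
          omega
  have hexpC' : (4:ℝ)^k * C^2 ≤ R ^ (9^(M+2)) := by
    calc (4:ℝ)^k * C^2 ≤ R^k * R^2 := by
          have hCR : C ≤ R := by rw [hRdef]; linarith only [hC]
          have hh1 : (4:ℝ)^k ≤ R^k := pow_le_pow_left₀ (by norm_num) (by linarith only [hR6]) k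
          have hh2 : C^2 ≤ R^2 := by
            have := mul_le_mul hCR hCR hC0.le (le_trans hC0.le hCR)
            calc C^2 = C*C := sq C
              _ ≤ R*R := this
              _ = R^2 := (sq R).symm
          exact mul_le_mul hh1 hh2 (sq_nonneg C) (pow_nonneg hR0.le k)
      _ = R ^ (k + 2) := by rw [← pow_add]
      _ ≤ R ^ (9^(M+2)) := by
          apply pow_le_pow_right₀ hR1
          have : M + 2 < 9 ^ (M+2) := Nat.lt_pow_self (by norm_num)
          omega
  have hse : s ^ ((4:ℝ)^k * C^2 * η) ≤ s ^ (R ^ (9^(M+2)) * η) := by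
    apply Real.rpow_le_rpow_of_exponent_le hs1'
    exact mul_le_mul_of_nonneg_right hexpC' hη0.le
  have hse0 : (0:ℝ) ≤ s ^ ((4:ℝ)^k * C^2 * η) := Real.rpow_nonneg (by linarith) _
  have hgoal : A k s + B k s ≤ R ^ (9^(M+2)) * η * s ^ (R ^ (9^(M+2)) * η) := by
    calc A k s + B k s ≤ 2 * D k * η * s ^ ((4:ℝ)^k * C^2 * η) := by
          linarith only [hAb, hBb]
      _ ≤ R ^ (9^(M+2)) * η * s ^ ((4:ℝ)^k * C^2 * η) := by
          apply mul_le_mul_of_nonneg_right _ hse0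
          apply mul_le_mul_of_nonneg_right h2D hη0.le
      _ ≤ R ^ (9^(M+2)) * η * s ^ (R ^ (9^(M+2)) * η) := by
          apply mul_le_mul_of_nonneg_left hse
          positivity
  have hasc : R ^ (9^(M+2)) * η = R ^ (9^(M+2)) * C₁ * ε := by
    rw [hηdef, mul_assoc]
  rw [← hasc]
  exact hgoal
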